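/- Let X_1, …, X_n be exchangeable real-valued random variables that are almost surely pairwise distinct, and let ξ be uniform on [0,1] (independent of X_1, …, X_n). Then the conformal p-value p_n = |{i ≤ n : X_i < X_n}|/n + ξ·(1/n) satisfies P(p_n ≤ β) = β for all β ∈ [0,1]. -/

import Mathlib

open MeasureTheory ProbabilityTheory
open scoped ENNReal

namespace ConformalAux

noncomputable def rankFn {n : ℕ} (j : Fin n) (x : Fin n → ℝ) : ℕ :=
  (Finset.univ.filter fun i => x i < x j).card

lemma rankFn_lt {n : ℕ} (j : Fin n) (x : Fin n → ℝ) : rankFn j x < n := by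
  have h : (Finset.univ.filter fun i => x i < x j) ⊆ Finset.univ.erase j := by
    intro i hi
    simp only [Finset.mem_filter, Finset.mem_univ, true_and] at hi
    refine Finset.mem_erase.mpr ⟨?_, Finset.mem_univ _⟩
    rintro rfl; exact lt_irrefl _ hi
  calc rankFn j x ≤ (Finset.univ.erase j).card := Finset.card_le_card h
    _ < n := by
        rw [Finset.card_erase_of_mem (Finset.mem_univ _), Finset.card_univ, Fintype.card_fin]
        have := j.pos
        omega

lemma measurable_rankFn {n : ℕ} (j : Fin n) : Measurable (rankFn (n := n) j) := by
  have : rankFn (n := n) j = fun x => ∑ i : Fin n, if x i < x j then 1 else 0 := by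
    funext x
    exact Finset.card_filter _ _
  rw [this]
  exact Finset.measurable_sum _ fun i _ =>
    Measurable.ite (measurableSet_lt (measurable_pi_apply i) (measurable_pi_apply j))
      measurable_const measurable_const

lemma rankFn_comp_perm {n : ℕ} (σ : Equiv.Perm (Fin n)) (j : Fin n) (x : Fin n → ℝ) :
    rankFn j (fun i => x (σ i)) = rankFn (σ j) x := by
  unfold rankFn
  apply Finset.card_bij (fun i _ => σ i)
  · intro a ha
    simp only [Finset.mem_filter, Finset.mem_univ, true_and] at ha ⊢
    exact ha
  · intro a _ b _ h
    exact σ.injective h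
  · intro b hb
    refine ⟨σ.symm b, ?_, by simp⟩
    simp only [Finset.mem_filter, Finset.mem_univ, true_and] at hb ⊢
    simpa using hb

lemma rankFn_injOn {n : ℕ} (x : Fin n → ℝ) (hx : ∀ i j, i ≠ j → x i ≠ x j) :
    Function.Injective (fun j => rankFn j x) := by
  intro a b hab
  by_contra hne
  wlog hlt : x a < x b generalizing a b
  · exact this hab.symm (Ne.symm hne) (lt_of_le_of_ne (not_lt.mp hlt) (hx b a (Ne.symm hne)))
  have hsub : (Finset.univ.filter fun i => x i < x a) ⊂ (Finset.univ.filter fun i => x i < x b) := by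
    constructor
    · intro i hi
      simp only [Finset.mem_filter, Finset.mem_univ, true_and] at hi ⊢
      exact hi.trans hlt
    · intro hsub'
      have : a ∈ (Finset.univ.filter fun i => x i < x b) := by
        simp [hlt]
      have := hsub' this
      simp at this
  have := Finset.card_lt_card hsub
  simp only [rankFn] at hab
  omega

lemma rankFn_surj {n : ℕ} (x : Fin n → ℝ) (hx : ∀ i j, i ≠ j → x i ≠ x j)
    (k : ℕ) (hk : k < n) : ∃ j, rankFn j x = k := by
  have hinj : Function.Injective (fun j : Fin n => (⟨rankFn j x, rankFn_lt j x⟩ : Fin n)) := by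
    intro a b h
    exact rankFn_injOn x hx (by simpa using congrArg Fin.val h)
  have hsurj := Finite.surjective_of_injective hinj
  obtain ⟨j, hj⟩ := hsurj ⟨k, hk⟩
  exact ⟨j, by simpa using congrArg Fin.val hj⟩

lemma clamp_sum (n : ℕ) (t : ℝ) (h0 : 0 ≤ t) (h1 : t ≤ n) :
    ∑ k ∈ Finset.range n, max (min (t - k) 1) 0 = t := by
  induction n with
  | zero =>
    simp only [Nat.cast_zero] at h1
    simp [le_antisymm h1 h0]
  | succ n ih =>
    rw [Finset.sum_range_succ]
    rcases le_or_gt t n with h | h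
    · rw [ih h]
      have h2 : min (t - n) 1 ≤ 0 := le_trans (min_le_left _ _) (by linarith)
      rw [max_eq_right h2]; ring
    · have hterm : ∀ k ∈ Finset.range n, max (min (t - (k : ℕ) : ℝ) 1) 0 = 1 := by
        intro k hk
        have hk' := Finset.mem_range.mp hk
        have : (k : ℝ) + 1 ≤ n := by exact_mod_cast hk'
        have h1' : (1 : ℝ) ≤ t - k := by linarith
        rw [min_eq_right h1', max_eq_left (by linarith)]
      rw [Finset.sum_congr rfl hterm, Finset.sum_const, Finset.card_range, nsmul_eq_mul, mul_one]
      have ht1 : t - n ≤ 1 := by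
        have : (t : ℝ) ≤ n + 1 := by push_cast at h1 ⊢; linarith
        linarith
      rw [min_eq_left ht1, max_eq_left (by linarith)]
      ring

end ConformalAux

open ConformalAux

/-- Uniformity of the randomized conformal p-value: if `X 0, …, X (n-1)` are exchangeable,
a.s. pairwise distinct, and `ξ` is uniform on `[0,1]` independent of the `X`'s, then the
conformal p-value `p_n = (#{i : X i < X (n-1)} + ξ) / n` satisfies `P(p_n ≤ β) = β` for
all `β ∈ [0,1]`. -/
theorem conformal_pvalue_uniform {Ω : Type*} {m0 : MeasurableSpace Ω} {μ : Measure Ω}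
    [IsProbabilityMeasure μ] {n : ℕ} (hn : 0 < n)
    (X : Fin n → Ω → ℝ) (hX : ∀ i, Measurable (X i))
    (hexch : ∀ σ : Equiv.Perm (Fin n),
      Measure.map (fun ω i => X (σ i) ω) μ = Measure.map (fun ω i => X i ω) μ)
    (hdist : ∀ᵐ ω ∂μ, ∀ i j, i ≠ j → X i ω ≠ X j ω)
    (ξ : Ω → ℝ) (hξ : Measurable ξ)
    (hξunif : Measure.map ξ μ = volume.restrict (Set.Icc (0 : ℝ) 1))
    (hξindep : IndepFun ξ (fun ω i => X i ω) μ)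
    (pn : Ω → ℝ)
    (hpn : ∀ ω, pn ω =
      ((Finset.univ.filter fun i => X i ω < X ⟨n - 1, by omega⟩ ω).card : ℝ) / n
        + ξ ω / n) :
    ∀ β ∈ Set.Icc (0 : ℝ) 1, μ {ω | pn ω ≤ β} = ENNReal.ofReal β := by
  intro β hβ
  obtain ⟨hβ0, hβ1⟩ := hβ
  set last : Fin n := ⟨n - 1, by omega⟩ with hlast
  set V : Ω → (Fin n → ℝ) := fun ω i => X i ω with hV
  have hVmeas : Measurable V := measurable_pi_lambda _ fun i => hX i
  set R : Ω → ℕ := fun ω => rankFn last (V ω) with hR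
  -- measure of ξ events
  have hξle : ∀ t : ℝ, μ {ω | ξ ω ≤ t} = ENNReal.ofReal (min t 1) := by
    intro t
    have : {ω | ξ ω ≤ t} = ξ ⁻¹' (Set.Iic t) := rfl
    rw [this, ← Measure.map_apply hξ measurableSet_Iic, hξunif,
      Measure.restrict_apply measurableSet_Iic]
    rcases lt_or_ge t 0 with h | h
    · have : Set.Iic t ∩ Set.Icc (0 : ℝ) 1 = ∅ := by
        ext y; simp only [Set.mem_inter_iff, Set.mem_Iic, Set.mem_Icc, Set.mem_empty_iff_false,
          iff_false, not_and]
        intro h1 h2; linarith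
      rw [this]
      simp [ENNReal.ofReal_eq_zero.mpr (le_of_lt (lt_of_le_of_lt (min_le_left _ _) h))]
    · have : Set.Iic t ∩ Set.Icc (0 : ℝ) 1 = Set.Icc 0 (min t 1) := by
        ext y
        simp only [Set.mem_inter_iff, Set.mem_Iic, Set.mem_Icc, le_min_iff]
        constructor
        · rintro ⟨h1, h2, h3⟩; exact ⟨h2, h1, h3⟩
        · rintro ⟨h1, h2, h3⟩; exact ⟨h2, h1, h3⟩
      rw [this, Real.volume_Icc, sub_zero]
  -- each rank event has measure 1/n
  have hrank : ∀ k : ℕ, k < n → μ {ω | R ω = k} = (n : ℝ≥0∞)⁻¹ := by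
    intro k hk
    -- exchangeability: rank wrt j has same law
    have hsame : ∀ j : Fin n, μ {ω | rankFn j (V ω) = k} = μ {ω | R ω = k} := by
      intro j
      set σ : Equiv.Perm (Fin n) := Equiv.swap j last with hσ
      have hmeasset : MeasurableSet {x : Fin n → ℝ | rankFn last x = k} :=
        measurable_rankFn last (measurableSet_singleton k)
      have h1 : μ {ω | R ω = k} = (Measure.map V μ) {x | rankFn last x = k} := by
        rw [Measure.map_apply hVmeas hmeasset]; rfl
      have hVσmeas : Measurable (fun ω i => X (σ i) ω) :=
        measurable_pi_lambda _ fun i => hX (σ i)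
      have h2 : (Measure.map V μ) {x | rankFn last x = k}
          = μ {ω | rankFn last (fun i => X (σ i) ω) = k} := by
        rw [← hexch σ, Measure.map_apply hVσmeas hmeasset]; rfl
      have h3 : ∀ ω, rankFn last (fun i => X (σ i) ω) = rankFn j (V ω) := by
        intro ω
        have := rankFn_comp_perm σ last (V ω)
        simp only [hV] at this ⊢
        rw [this, hσ, Equiv.swap_apply_right]
      rw [h1, h2]
      congr 1
      ext ω
      simp [h3 ω]
    -- partition
    set D : Set Ω := {ω | ∀ i j, i ≠ j → X i ω ≠ X j ω} with hD
    have hDmeas : MeasurableSet D := by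
      have : D = ⋂ (i : Fin n) (j : Fin n) (_ : i ≠ j), {ω | X i ω ≠ X j ω} := by
        ext ω; simp [hD]
      rw [this]
      exact MeasurableSet.iInter fun i => MeasurableSet.iInter fun j =>
        MeasurableSet.iInter fun _ => (measurableSet_eq_fun (hX i) (hX j)).compl
    have hDfull : μ Dᶜ = 0 := by
      have hdist' := hdist
      rw [ae_iff] at hdist'
      rw [hD, Set.compl_setOf]
      convert hdist' using 2
    set B : Fin n → Set Ω := fun j => {ω | rankFn j (V ω) = k} ∩ D with hB
    have hBmeas : ∀ j, MeasurableSet (B j) := by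
      intro j
      exact ((measurable_rankFn j).comp hVmeas (measurableSet_singleton k)).inter hDmeas
    have hBdisj : Pairwise (Function.onFun Disjoint B) := by
      intro a b hab
      simp only [Function.onFun, Set.disjoint_left]
      rintro ω ⟨ha, hωD⟩ ⟨hb, _⟩
      exact hab (rankFn_injOn (V ω) hωD (ha.trans hb.symm))
    have hBcover : ⋃ j, B j = D := by
      apply Set.Subset.antisymm
      · exact Set.iUnion_subset fun j => Set.inter_subset_right
      · intro ω hω
        obtain ⟨j, hj⟩ := rankFn_surj (V ω) hω k hk
        exact Set.mem_iUnion.mpr ⟨j, hj, hω⟩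
    have hsum : ∑ j : Fin n, μ (B j) = 1 := by
      rw [← tsum_fintype (L := SummationFilter.unconditional _), ← measure_iUnion hBdisj hBmeas, hBcover]
      exact (prob_compl_eq_zero_iff hDmeas).mp hDfull
    have hBval : ∀ j, μ (B j) = μ {ω | R ω = k} := by
      intro j
      rw [hB]
      simp only
      rw [measure_inter_conull hDfull, hsame j]
    rw [Finset.sum_congr rfl (fun j _ => hBval j), Finset.sum_const, Finset.card_univ,
      Fintype.card_fin, nsmul_eq_mul] at hsum
    have hn' : (n : ℝ≥0∞) ≠ 0 := Nat.cast_ne_zero.mpr hn.ne'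
    have htop : (n : ℝ≥0∞) ≠ ⊤ := ENNReal.natCast_ne_top n
    have : μ {ω | R ω = k} = (n : ℝ≥0∞)⁻¹ * ((n : ℝ≥0∞) * μ {ω | R ω = k}) := by
      rw [← mul_assoc, ENNReal.inv_mul_cancel hn' htop, one_mul]
    rw [hsum, mul_one] at this
    exact this
  -- decomposition of the event
  have hn0 : (0 : ℝ) < n := by exact_mod_cast hn
  have hcard : ∀ ω, ((Finset.univ.filter fun i => X i ω < X ⟨n - 1, by omega⟩ ω).card) = R ω :=
    fun ω => rfl
  have hpn' : ∀ ω, (pn ω ≤ β ↔ (R ω : ℝ) + ξ ω ≤ n * β) := by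
    intro ω
    rw [hpn ω, ← add_div, div_le_iff₀ hn0, hcard ω, mul_comm]
  have hRlt : ∀ ω, R ω < n := fun ω => rankFn_lt last (V ω)
  have hdecomp : {ω | pn ω ≤ β}
      = ⋃ k : Fin n, ({ω | R ω = (k : ℕ)} ∩ {ω | ξ ω ≤ n * β - (k : ℕ)}) := by
    ext ω
    simp only [Set.mem_setOf_eq, Set.mem_iUnion, Set.mem_inter_iff]
    rw [hpn' ω]
    constructor
    · intro h
      exact ⟨⟨R ω, hRlt ω⟩, rfl, by push_cast; linarith⟩
    · rintro ⟨k, hk1, hk2⟩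
      rw [hk1]
      linarith
  have hRmeas : ∀ k : ℕ, MeasurableSet {ω | R ω = k} :=
    fun k => (measurable_rankFn last).comp hVmeas (measurableSet_singleton k)
  have hterm : ∀ k : Fin n,
      μ ({ω | R ω = (k : ℕ)} ∩ {ω | ξ ω ≤ n * β - (k : ℕ)})
        = (n : ℝ≥0∞)⁻¹ * ENNReal.ofReal (min (n * β - (k : ℕ)) 1) := by
    intro k
    have heq : {ω | R ω = (k : ℕ)} ∩ {ω | ξ ω ≤ n * β - (k : ℕ)}
        = ξ ⁻¹' (Set.Iic (n * β - (k : ℕ))) ∩ V ⁻¹' (rankFn last ⁻¹' {(k : ℕ)}) := by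
      rw [Set.inter_comm]; rfl
    rw [heq, hξindep.measure_inter_preimage_eq_mul _ _ measurableSet_Iic
      (measurable_rankFn last (measurableSet_singleton _))]
    have h1 : μ (ξ ⁻¹' (Set.Iic (n * β - (k : ℕ)))) = ENNReal.ofReal (min (n * β - (k : ℕ)) 1) :=
      hξle _
    have h2 : μ ((fun ω i => X i ω) ⁻¹' (rankFn last ⁻¹' {(k : ℕ)})) = (n : ℝ≥0∞)⁻¹ :=
      hrank k k.isLt
    rw [h1, h2, mul_comm]
  have hdisj : Pairwise (Function.onFun Disjoint
      fun k : Fin n => ({ω | R ω = (k : ℕ)} ∩ {ω | ξ ω ≤ n * β - (k : ℕ)})) := by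
    intro a b hab
    simp only [Function.onFun, Set.disjoint_left]
    rintro ω ⟨ha, -⟩ ⟨hb, -⟩
    simp only [Set.mem_setOf_eq] at ha hb
    exact hab (Fin.ext (by rw [← ha, ← hb]))
  have hmeas : ∀ k : Fin n,
      MeasurableSet ({ω | R ω = (k : ℕ)} ∩ {ω | ξ ω ≤ n * β - (k : ℕ)}) :=
    fun k => (hRmeas k).inter (hξ measurableSet_Iic)
  rw [hdecomp, measure_iUnion hdisj hmeas]
  rw [tsum_fintype]
  have hsum2 : ∑ k : Fin n, μ ({ω | R ω = (k : ℕ)} ∩ {ω | ξ ω ≤ n * β - (k : ℕ)})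
      = (n : ℝ≥0∞)⁻¹ * ∑ k : Fin n, ENNReal.ofReal (min (n * β - (k : ℕ)) 1) := by
    rw [Finset.mul_sum]
    exact Finset.sum_congr rfl fun k _ => hterm k
  rw [hsum2]
  have hofmax : ∀ a : ℝ, ENNReal.ofReal a = ENNReal.ofReal (max a 0) := by
    intro a
    rcases le_total a 0 with h | h
    · rw [max_eq_right h, ENNReal.ofReal_zero, ENNReal.ofReal_eq_zero.mpr h]
    · rw [max_eq_left h]
  have hsum3 : ∑ k : Fin n, ENNReal.ofReal (min (n * β - (k : ℕ)) 1)
      = ENNReal.ofReal (n * β) := by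
    calc ∑ k : Fin n, ENNReal.ofReal (min (n * β - (k : ℕ)) 1)
        = ∑ k : Fin n, ENNReal.ofReal (max (min (n * β - (k : ℕ)) 1) 0) := by
          exact Finset.sum_congr rfl fun k _ => hofmax _
      _ = ENNReal.ofReal (∑ k : Fin n, max (min (n * β - (k : ℕ)) 1) 0) := by
          rw [ENNReal.ofReal_sum_of_nonneg fun k _ => le_max_right _ _]
      _ = ENNReal.ofReal (n * β) := by
          rw [Fin.sum_univ_eq_sum_range (fun k => max (min (n * β - (k : ℕ)) 1) 0) n]
          rw [clamp_sum n (n * β) (by positivity) (by nlinarith)]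
  rw [hsum3, ENNReal.ofReal_mul (by positivity), ENNReal.ofReal_natCast, ← mul_assoc,
    ENNReal.inv_mul_cancel (Nat.cast_ne_zero.mpr hn.ne') (ENNReal.natCast_ne_top n), one_mul]
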